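/- arXiv:1601.07238 — 7 statements merged into one kernel-verified Lean document; each statement's English description precedes it below -/
import Mathlib

section
/- Let R be a commutative ring with identity, let X be a topological space, and let ~ be an equivalence relation on X under which the saturation of every open set is open. Let π : O → L(R) be consistent. Then the function ρ_π : X → L(R) defined by ρ_π(u) := ⋃_{U ⊆ X open with u ∈ U} π([U]) is continuous with respect to the topology on L(R) generated by the sets Z(F), and ρ_π is invariant, i.e. ρ_π(u) = ρ_π(v) whenever u ~ v. -/
/-- For a finite subset `F ⊆ R`, `Z(F)` is the set of ideals of `R` containing `F`. -/
def zSet (R : Type*) [CommRing R] (F : Finset R) : Set (Ideal R) :=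
  {I : Ideal R | (F : Set R) ⊆ (I : Set R)}

/-- The topology on the set of ideals of `R` generated by the sets `Z(F)`. -/
instance idealTopology (R : Type*) [CommRing R] : TopologicalSpace (Ideal R) :=
  TopologicalSpace.generateFrom {S : Set (Ideal R) | ∃ F : Finset R, S = zSet R F}

variable {X : Type*} [TopologicalSpace X]

/-- The saturation `[U]` of a set `U` under an equivalence relation. -/
def saturation (s : Setoid X) (U : Set X) : Set X := {x | ∃ u ∈ U, s.r x u}

/-- The saturation of every open set is open. -/
def OpenSaturations (s : Setoid X) : Prop :=
  ∀ U : Set X, IsOpen U → IsOpen (saturation s U)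

/-- A set is invariant if it is a union of equivalence classes. -/
def InvariantSet (s : Setoid X) (U : Set X) : Prop :=
  ∀ x y : X, s.r x y → x ∈ U → y ∈ U

/-- The collection of nonempty open invariant subsets of `X`. -/
def OpenInv (X : Type*) [TopologicalSpace X] (s : Setoid X) :=
  {U : Set X // U.Nonempty ∧ IsOpen U ∧ InvariantSet s U}

/-- The union of a nonempty family of nonempty open invariant sets. -/
def unionOpenInv (s : Setoid X) (A : Set (OpenInv X s)) (hA : A.Nonempty) :
    OpenInv X s :=
  ⟨⋃ U ∈ A, U.1, by
    obtain ⟨U, hU⟩ := hA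
    obtain ⟨x, hx⟩ := U.2.1
    exact ⟨x, Set.mem_biUnion hU hx⟩,
   isOpen_biUnion fun U _ => U.2.2.1, by
    intro x y hxy hx
    obtain ⟨U, hU, hxU⟩ := Set.mem_iUnion₂.mp hx
    exact Set.mem_iUnion₂.mpr ⟨U, hU, U.2.2.2 x y hxy hxU⟩⟩

/-- A function `π : O → L(R)` is consistent if it takes unions of nonempty families
to intersections of ideals. -/
def ConsistentOn {R : Type*} [CommRing R] (s : Setoid X) (π : OpenInv X s → Ideal R) : Prop :=
  ∀ (A : Set (OpenInv X s)) (hA : A.Nonempty),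
    π (unionOpenInv s A hA) = ⨅ U ∈ A, π U

/-- The saturation of a nonempty open set, as a nonempty open invariant set. -/
def satOpenInv (s : Setoid X) (hs : OpenSaturations s) (U : Set X) (hU : IsOpen U)
    (hne : U.Nonempty) : OpenInv X s :=
  ⟨saturation s U, by
    obtain ⟨x, hx⟩ := hne
    exact ⟨x, x, hx, s.refl x⟩,
   hs U hU, by
    rintro x y hxy ⟨u, hu, hxu⟩
    exact ⟨u, hu, s.trans (s.symm hxy) hxu⟩⟩

/-- The set `ρ_π(u) := ⋃ { π([U]) : U ⊆ X open, u ∈ U }`. -/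
def rhoPiSet {R : Type*} [CommRing R] (s : Setoid X) (hs : OpenSaturations s)
    (π : OpenInv X s → Ideal R) (u : X) : Set R :=
  ⋃ (U : Set X), ⋃ (h : IsOpen U ∧ u ∈ U),
    ((π (satOpenInv s hs U h.1 ⟨u, h.2⟩) : Ideal R) : Set R)

lemma saturation_idem (s : Setoid X) (U : Set X) :
    saturation s (saturation s U) = saturation s U := by
  ext x
  constructor
  · rintro ⟨v, ⟨u, hu, hvu⟩, hxv⟩
    exact ⟨u, hu, s.trans hxv hvu⟩
  · intro hx
    exact ⟨x, hx, s.refl x⟩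

lemma mem_rhoPiSet_iff {R : Type*} [CommRing R] (s : Setoid X) (hs : OpenSaturations s)
    (π : OpenInv X s → Ideal R) (u : X) (f : R) :
    f ∈ rhoPiSet s hs π u ↔
      ∃ U : Set X, ∃ h : IsOpen U ∧ u ∈ U, f ∈ π (satOpenInv s hs U h.1 ⟨u, h.2⟩) := by
  simp only [rhoPiSet, Set.mem_iUnion, SetLike.mem_coe]

/-- if `π : O → L(R)` is consistent, then the function
`ρ_π : X → L(R)`, `ρ_π(u) = ⋃ { π([U]) : U ⊆ X open, u ∈ U }`, is continuous
(for the topology on `L(R)` generated by the sets `Z(F)`) and invariant. -/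
theorem rhoPi_continuous_invariant {R : Type*} [CommRing R] (s : Setoid X)
    (hs : OpenSaturations s) (π : OpenInv X s → Ideal R) (hπ : ConsistentOn s π)
    (ρ : X → Ideal R) (hρ : ∀ u : X, ((ρ u : Ideal R) : Set R) = rhoPiSet s hs π u) :
    Continuous ρ ∧ ∀ x y : X, s.r x y → ρ x = ρ y := by
  have hmem : ∀ (u : X) (f : R), f ∈ ρ u ↔
      ∃ U : Set X, ∃ h : IsOpen U ∧ u ∈ U, f ∈ π (satOpenInv s hs U h.1 ⟨u, h.2⟩) := by
    intro u f
    rw [← SetLike.mem_coe, hρ u, mem_rhoPiSet_iff]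
  constructor
  · rw [continuous_generateFrom_iff]
    rintro S ⟨F, rfl⟩
    rw [isOpen_iff_forall_mem_open]
    intro u hu
    have hF : ∀ f ∈ F, ∃ U : Set X, ∃ h : IsOpen U ∧ u ∈ U,
        f ∈ π (satOpenInv s hs U h.1 ⟨u, h.2⟩) := by
      intro f hf
      exact (hmem u f).mp (hu (by exact_mod_cast hf))
    choose U hU using hF
    refine ⟨⋂ (f : {x // x ∈ F}), U f.1 f.2, ?_, ?_, ?_⟩
    · intro v hv
      intro f hf
      have hfF : f ∈ F := by exact_mod_cast hf
      have hvU : v ∈ U f hfF := Set.mem_iInter.mp hv ⟨f, hfF⟩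
      rw [SetLike.mem_coe, hmem v f]
      exact ⟨U f hfF, ⟨(hU f hfF).1.1, hvU⟩, (hU f hfF).2⟩
    · exact isOpen_iInter_of_finite fun f => (hU f.1 f.2).1.1
    · exact Set.mem_iInter.mpr fun f => (hU f.1 f.2).1.2
  · have key : ∀ x y : X, s.r x y → ∀ f : R, f ∈ ρ x → f ∈ ρ y := by
      intro x y hxy f hfx
      obtain ⟨U, h, hfU⟩ := (hmem x f).mp hfx
      rw [hmem y f]
      refine ⟨saturation s U, ⟨hs U h.1, ⟨x, h.2, s.symm hxy⟩⟩, ?_⟩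
      have : satOpenInv s hs (saturation s U) (hs U h.1)
          ⟨y, ⟨x, h.2, s.symm hxy⟩⟩ = satOpenInv s hs U h.1 ⟨x, h.2⟩ := by
        apply Subtype.ext
        exact saturation_idem s U
      rw [this]
      exact hfU
    intro x y hxy
    ext f
    exact ⟨key x y hxy f, key y x (s.symm hxy) f⟩
end

section
/- Let R be a commutative ring with identity, let X be a topological space, and let ~ be an equivalence relation on X under which the saturation of every open set is open. Let π : O → L(R) be consistent and define ρ_π : X → L(R) by ρ_π(u) := ⋃_{U ⊆ X open with u ∈ U} π([U]). Then for every U ∈ O one has ⋂_{u∈U} ρ_π(u) = π(U); that is, π_{ρ_π} = π. -/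
variable {X : Type*} [TopologicalSpace X]

lemma pi_antitone {R : Type*} [CommRing R] (s : Setoid X) (π : OpenInv X s → Ideal R)
    (hπ : ConsistentOn s π) {A B : OpenInv X s} (hAB : A.1 ⊆ B.1) : π B ≤ π A := by
  have hne : ({A, B} : Set (OpenInv X s)).Nonempty := ⟨A, Or.inl rfl⟩
  have hu : unionOpenInv s {A, B} hne = B := by
    apply Subtype.ext
    show ⋃ U ∈ ({A, B} : Set (OpenInv X s)), U.1 = B.1
    ext x
    simp only [Set.mem_iUnion, Set.mem_insert_iff, Set.mem_singleton_iff]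
    constructor
    · rintro ⟨U, (rfl | rfl), hx⟩
      · exact hAB hx
      · exact hx
    · intro hx; exact ⟨B, Or.inr rfl, hx⟩
  have := hπ {A, B} hne
  rw [hu] at this
  rw [this]
  exact iInf₂_le A (Or.inl rfl)

lemma sat_of_inv (s : Setoid X) {U : Set X} (hU : InvariantSet s U) :
    saturation s U = U := by
  ext x
  constructor
  · rintro ⟨w, hw, hxw⟩
    exact hU w x (s.symm hxw) hw
  · intro hx; exact ⟨x, hx, s.refl x⟩

/-- if `π : O → L(R)` is consistent and
`ρ_π(u) = ⋃ { π([U]) : U ⊆ X open, u ∈ U }`, then for every `U ∈ O` one has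
`⋂_{u ∈ U} ρ_π(u) = π(U)`; that is, `π_{ρ_π} = π`. -/
theorem piRhoPi_eq_pi {R : Type*} [CommRing R] (s : Setoid X)
    (hs : OpenSaturations s) (π : OpenInv X s → Ideal R) (hπ : ConsistentOn s π) :
    ∀ U : OpenInv X s, (⋂ u ∈ U.1, rhoPiSet s hs π u) = ((π U : Ideal R) : Set R) := by
  intro U
  apply Set.Subset.antisymm
  · -- hard direction
    intro r hr
    simp only [Set.mem_iInter] at hr
    -- for each u ∈ U.1, choose an open V ∋ u with r ∈ π([V])
    have h : ∀ u : U.1, ∃ V : Set X, ∃ hV : IsOpen V ∧ (u : X) ∈ V,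
        r ∈ π (satOpenInv s hs V hV.1 ⟨u, hV.2⟩) := by
      rintro ⟨u, hu⟩
      have := hr u hu
      simp only [rhoPiSet, Set.mem_iUnion, SetLike.mem_coe] at this
      exact this
    choose V hV hrV using h
    -- shrink: W u := V u ∩ U.1
    set W : U.1 → Set X := fun u => V u ∩ U.1 with hW
    have hWopen : ∀ u, IsOpen (W u) := fun u => (hV u).1.inter U.2.2.1
    have hWmem : ∀ u : U.1, (u : X) ∈ W u := fun u => ⟨(hV u).2, u.2⟩
    set T : U.1 → OpenInv X s :=
      fun u => satOpenInv s hs (W u) (hWopen u) ⟨u, hWmem u⟩ with hT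
    have hAne : (Set.range T).Nonempty := Set.range_nonempty_iff_nonempty.mpr
      (Set.Nonempty.to_subtype U.2.1)
    have hunion : unionOpenInv s (Set.range T) hAne = U := by
      apply Subtype.ext
      show ⋃ V ∈ Set.range T, V.1 = U.1
      ext x
      simp only [Set.mem_iUnion, Set.mem_range]
      constructor
      · rintro ⟨Vv, ⟨u, rfl⟩, hx⟩
        obtain ⟨w, hw, hxw⟩ := hx
        exact U.2.2.2 w x (s.symm hxw) hw.2
      · intro hx
        refine ⟨T ⟨x, hx⟩, ⟨⟨x, hx⟩, rfl⟩, ?_⟩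
        exact ⟨x, hWmem ⟨x, hx⟩, s.refl x⟩
    have := hπ (Set.range T) hAne
    rw [hunion] at this
    rw [SetLike.mem_coe, this]
    simp only [Ideal.mem_iInf]
    rintro V' ⟨u, rfl⟩
    -- r ∈ π (T u): use antitone from π (satOpenInv ... (V u))
    have hsub : (T u).1 ⊆ (satOpenInv s hs (V u) (hV u).1 ⟨u, (hV u).2⟩).1 := by
      rintro x ⟨w, hw, hxw⟩
      exact ⟨w, hw.1, hxw⟩
    exact pi_antitone s π hπ hsub (hrV u)
  · -- easy direction
    intro r hr
    simp only [Set.mem_iInter]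
    intro u hu
    simp only [rhoPiSet, Set.mem_iUnion]
    refine ⟨U.1, ⟨U.2.2.1, hu⟩, ?_⟩
    have : satOpenInv s hs U.1 U.2.2.1 ⟨u, hu⟩ = U :=
      Subtype.ext (sat_of_inv s U.2.2.2)
    rw [this]
    exact hr
end

section
/- Let R be a commutative ring with identity, let X be a topological space, and let ~ be an equivalence relation on X under which the saturation of every open set is open. Let ρ : X → L(R) be continuous (with respect to the topology on L(R) generated by the sets Z(F)) and invariant. Then for every u ∈ X one has ⋃_{W ⊆ X open with u ∈ W} ( ⋂_{v∈[W]} ρ(v) ) = ρ(u); that is, ρ_{π_ρ} = ρ. -/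
variable {X : Type*} [TopologicalSpace X]

/-- if `ρ : X → L(R)` is continuous and invariant, then for every
`u ∈ X` one has `⋃_{W open, u ∈ W} (⋂_{v ∈ [W]} ρ(v)) = ρ(u)`;
that is, `ρ_{π_ρ} = ρ`. -/
theorem rhoPiRho_eq_rho {R : Type*} [CommRing R] (s : Setoid X)
    (hs : OpenSaturations s) (ρ : X → Ideal R) (hcont : Continuous ρ)
    (hinv : ∀ x y : X, s.r x y → ρ x = ρ y) (u : X) :
    (⋃ (W : Set X), ⋃ (_ : IsOpen W ∧ u ∈ W),
        ⋂ v ∈ saturation s W, ((ρ v : Ideal R) : Set R)) = ((ρ u : Ideal R) : Set R) := by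
  apply subset_antisymm
  · intro r hr
    obtain ⟨S, ⟨W, rfl⟩, hS⟩ := hr
    obtain ⟨T, ⟨hW, rfl⟩, hT⟩ := hS
    exact Set.mem_iInter₂.mp hT u ⟨u, hW.2, s.refl u⟩
  · intro r hr
    have hopen : IsOpen (ρ ⁻¹' (zSet R {r})) := by
      apply hcont.isOpen_preimage
      exact TopologicalSpace.GenerateOpen.basic _ ⟨{r}, rfl⟩
    refine Set.mem_iUnion.mpr ⟨ρ ⁻¹' (zSet R {r}), Set.mem_iUnion.mpr
      ⟨⟨hopen, by simpa [zSet] using hr⟩, ?_⟩⟩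
    refine Set.mem_iInter₂.mpr ?_
    rintro v ⟨w, hw, hvw⟩
    have : r ∈ ρ w := by simpa [zSet] using hw
    rw [hinv v w hvw]
    exact this
end

section
/- Let R be a commutative ring with identity, let X be a topological space, and let ~ be an equivalence relation on X under which the saturation of every open set is open. Then the map ρ ↦ π_ρ, where π_ρ(U) := ⋂_{u∈U} ρ(u), is a bijection from the set F' of continuous invariant functions ρ : X → L(R) onto the set F of consistent functions π : O → L(R), with inverse π ↦ ρ_π where ρ_π(u) := ⋃_{U ⊆ X open with u ∈ U} π([U]). -/
variable {X : Type*} [TopologicalSpace X]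

section Aux

variable {R : Type*} [CommRing R] {s : Setoid X}

lemma sat_mono {U V : Set X} (h : U ⊆ V) : saturation s U ⊆ saturation s V :=
  fun _ ⟨w, hw, hr⟩ => ⟨w, h hw, hr⟩

lemma sat_sat (U : Set X) : saturation s (saturation s U) = saturation s U := by
  ext x
  constructor
  · rintro ⟨w, ⟨v, hv, hwv⟩, hxw⟩
    exact ⟨v, hv, s.trans hxw hwv⟩
  · intro hx
    exact ⟨x, hx, s.refl x⟩

lemma sat_subset_of_invariant {U W : Set X} (hW : InvariantSet s W) (h : U ⊆ W) :
    saturation s U ⊆ W := by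
  rintro x ⟨w, hw, hxw⟩
  exact hW w x (s.symm hxw) (h hw)

lemma sat_of_invariant {W : Set X} (hW : InvariantSet s W) : saturation s W = W := by
  apply Set.Subset.antisymm (sat_subset_of_invariant hW (le_refl W))
  intro x hx; exact ⟨x, hx, s.refl x⟩

lemma piVal_congr (π : OpenInv X s → Ideal R) {V W : OpenInv X s} (h : V.1 = W.1) :
    π V = π W := congrArg π (Subtype.ext h)

lemma pi_antitone_s11 {π : OpenInv X s → Ideal R} (hπ : ConsistentOn s π)
    {V W : OpenInv X s} (h : V.1 ⊆ W.1) : π W ≤ π V := by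
  have hA : ({V, W} : Set (OpenInv X s)).Nonempty := ⟨V, by simp⟩
  have h1 := hπ {V, W} hA
  have h2 : (unionOpenInv s {V, W} hA).1 = W.1 := by
    show ⋃ U ∈ ({V, W} : Set (OpenInv X s)), U.1 = W.1
    simp [Set.union_eq_self_of_subset_left h]
  rw [piVal_congr π h2] at h1
  rw [h1]
  exact biInf_le π (Set.mem_insert V {W})

variable (s) in
/-- The candidate inverse: `ρ_π(u) = ⨆ { π([U]) : U open, u ∈ U }`. -/
def rhoPi (hs : OpenSaturations s) (π : OpenInv X s → Ideal R) (u : X) : Ideal R :=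
  ⨆ U : {U : Set X // IsOpen U ∧ u ∈ U}, π (satOpenInv s hs U.1 U.2.1 ⟨u, U.2.2⟩)

instance (u : X) : Nonempty {U : Set X // IsOpen U ∧ u ∈ U} :=
  ⟨⟨Set.univ, isOpen_univ, trivial⟩⟩

lemma rhoPi_directed (hs : OpenSaturations s) {π : OpenInv X s → Ideal R}
    (hπ : ConsistentOn s π) (u : X) :
    Directed (· ≤ ·) (fun U : {U : Set X // IsOpen U ∧ u ∈ U} =>
      π (satOpenInv s hs U.1 U.2.1 ⟨u, U.2.2⟩)) := by
  intro U V
  refine ⟨⟨U.1 ∩ V.1, U.2.1.inter V.2.1, U.2.2, V.2.2⟩, ?_, ?_⟩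
  · exact pi_antitone_s11 hπ (sat_mono Set.inter_subset_left)
  · exact pi_antitone_s11 hπ (sat_mono Set.inter_subset_right)

lemma mem_rhoPi_iff (hs : OpenSaturations s) {π : OpenInv X s → Ideal R}
    (hπ : ConsistentOn s π) (u : X) (a : R) :
    a ∈ rhoPi s hs π u ↔ ∃ U : {U : Set X // IsOpen U ∧ u ∈ U},
      a ∈ π (satOpenInv s hs U.1 U.2.1 ⟨u, U.2.2⟩) :=
  Submodule.mem_iSup_of_directed _ (rhoPi_directed hs hπ u)

lemma coe_rhoPi (hs : OpenSaturations s) {π : OpenInv X s → Ideal R}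
    (hπ : ConsistentOn s π) (u : X) :
    ((rhoPi s hs π u : Ideal R) : Set R) = rhoPiSet s hs π u := by
  rw [rhoPi, Submodule.coe_iSup_of_directed _ (rhoPi_directed hs hπ u), rhoPiSet]
  ext a
  simp only [Set.mem_iUnion, SetLike.mem_coe]
  exact ⟨fun ⟨U, h⟩ => ⟨U.1, ⟨U.2.1, U.2.2⟩, h⟩, fun ⟨U, h, hm⟩ => ⟨⟨U, h⟩, hm⟩⟩

lemma zSet_open (R : Type*) [CommRing R] (F : Finset R) : IsOpen (zSet R F) :=
  TopologicalSpace.GenerateOpen.basic _ ⟨F, rfl⟩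

/-- Key uniqueness lemma: a continuous invariant `ρ` with `π_ρ = π` equals `ρ_π`. -/
lemma rho_eq_rhoPi (hs : OpenSaturations s) (π : OpenInv X s → Ideal R)
    (ρ : X → Ideal R) (hc : Continuous ρ) (hinv : ∀ x y : X, s.r x y → ρ x = ρ y)
    (heq : (fun W : OpenInv X s => ⨅ u ∈ W.1, ρ u) = π) (u : X) :
    ρ u = rhoPi s hs π u := by
  apply le_antisymm
  · intro a ha
    have hVopen : IsOpen {v : X | a ∈ ρ v} := by
      have h1 := hc.isOpen_preimage _ (zSet_open R {a})
      have h2 : ρ ⁻¹' (zSet R {a}) = {v : X | a ∈ ρ v} := by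
        ext v; simp [zSet]
      rwa [h2] at h1
    have hmem : a ∈ π (satOpenInv s hs {v : X | a ∈ ρ v} hVopen ⟨u, ha⟩) := by
      rw [← heq]
      refine (Submodule.mem_iInf _).mpr fun v => (Submodule.mem_iInf _).mpr ?_
      rintro ⟨w, hw, hvw⟩
      rw [hinv v w hvw]
      exact hw
    exact le_iSup (fun U : {U : Set X // IsOpen U ∧ u ∈ U} =>
      π (satOpenInv s hs U.1 U.2.1 ⟨u, U.2.2⟩)) ⟨{v : X | a ∈ ρ v}, hVopen, ha⟩ hmem
  · apply iSup_le
    intro U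
    rw [← heq]
    exact biInf_le ρ ⟨u, U.2.2, s.refl u⟩

end Aux

section Main

variable {R : Type*} [CommRing R] {s : Setoid X}

lemma piOfRho_consistent (ρ : X → Ideal R) :
    ConsistentOn s (fun U : OpenInv X s => ⨅ u ∈ U.1, ρ u) := by
  intro A hA
  show ⨅ u ∈ (unionOpenInv s A hA).1, ρ u = _
  show ⨅ u ∈ ⋃ U ∈ A, U.1, ρ u = _
  apply le_antisymm
  · refine le_iInf₂ fun U hU => le_iInf₂ fun u hu => ?_
    exact biInf_le ρ (Set.mem_biUnion hU hu)
  · refine le_iInf₂ fun u hu => ?_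
    obtain ⟨U, hU, huU⟩ := Set.mem_iUnion₂.mp hu
    exact le_trans (biInf_le _ hU) (biInf_le ρ huU)

lemma rhoPi_invariant (hs : OpenSaturations s) {π : OpenInv X s → Ideal R} :
    ∀ x y : X, s.r x y → rhoPi s hs π x = rhoPi s hs π y := by
  suffices h : ∀ x y : X, s.r x y → rhoPi s hs π x ≤ rhoPi s hs π y from
    fun x y hxy => le_antisymm (h x y hxy) (h y x (s.symm hxy))
  intro x y hxy
  apply iSup_le
  intro U
  have hy : y ∈ saturation s U.1 := ⟨x, U.2.2, s.symm hxy⟩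
  have h1 : π (satOpenInv s hs U.1 U.2.1 ⟨x, U.2.2⟩)
      = π (satOpenInv s hs (saturation s U.1) (hs U.1 U.2.1) ⟨y, hy⟩) :=
    piVal_congr π (sat_sat U.1).symm
  rw [h1]
  exact le_iSup (fun V : {V : Set X // IsOpen V ∧ y ∈ V} =>
    π (satOpenInv s hs V.1 V.2.1 ⟨y, V.2.2⟩)) ⟨saturation s U.1, hs U.1 U.2.1, hy⟩

lemma rhoPi_continuous (hs : OpenSaturations s) {π : OpenInv X s → Ideal R}
    (hπ : ConsistentOn s π) : Continuous (rhoPi s hs π) := by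
  rw [continuous_generateFrom_iff]
  rintro S ⟨F, rfl⟩
  rw [isOpen_iff_forall_mem_open]
  intro u hu
  have hchoice : ∀ a : (F : Set R), ∃ U : Set X, ∃ hO : IsOpen U, ∃ hm : u ∈ U,
      (a : R) ∈ π (satOpenInv s hs U hO ⟨u, hm⟩) := by
    rintro ⟨a, ha⟩
    obtain ⟨⟨U, hO, hm⟩, hmem⟩ := (mem_rhoPi_iff hs hπ u a).mp (hu ha)
    exact ⟨U, hO, hm, hmem⟩
  choose f hO hm hmem using hchoice
  refine ⟨⋂ a : (F : Set R), f a, ?_, isOpen_iInter_of_finite hO, Set.mem_iInter.mpr hm⟩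
  intro v hv
  show (F : Set R) ⊆ rhoPi s hs π v
  intro a ha
  have hva : v ∈ f ⟨a, ha⟩ := Set.mem_iInter.mp hv ⟨a, ha⟩
  have h1 : π (satOpenInv s hs (f ⟨a, ha⟩) (hO ⟨a, ha⟩) ⟨v, hva⟩) ≤ rhoPi s hs π v :=
    le_iSup (fun V : {V : Set X // IsOpen V ∧ v ∈ V} =>
      π (satOpenInv s hs V.1 V.2.1 ⟨v, V.2.2⟩)) ⟨f ⟨a, ha⟩, hO ⟨a, ha⟩, hva⟩
  apply h1
  have h2 : π (satOpenInv s hs (f ⟨a, ha⟩) (hO ⟨a, ha⟩) ⟨u, hm ⟨a, ha⟩⟩)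
      = π (satOpenInv s hs (f ⟨a, ha⟩) (hO ⟨a, ha⟩) ⟨v, hva⟩) := piVal_congr π rfl
  rw [← h2]
  exact hmem ⟨a, ha⟩

lemma piOfRhoPi_eq (hs : OpenSaturations s) {π : OpenInv X s → Ideal R}
    (hπ : ConsistentOn s π) :
    (fun W : OpenInv X s => ⨅ u ∈ W.1, rhoPi s hs π u) = π := by
  funext W
  apply le_antisymm
  · intro a ha
    have ha' : ∀ u : W.1, a ∈ rhoPi s hs π u.1 := by
      intro u
      exact (Submodule.mem_iInf _).mp ((Submodule.mem_iInf _).mp ha u.1) u.2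
    have hch : ∀ u : W.1, ∃ U : Set X, ∃ hO : IsOpen U, ∃ hm : u.1 ∈ U,
        a ∈ π (satOpenInv s hs U hO ⟨u.1, hm⟩) := by
      intro u
      obtain ⟨⟨U, hO, hm⟩, hmem⟩ := (mem_rhoPi_iff hs hπ u.1 a).mp (ha' u)
      exact ⟨U, hO, hm, hmem⟩
    choose f hO hm hmem using hch
    set g : W.1 → OpenInv X s := fun u =>
      satOpenInv s hs (f u ∩ W.1) ((hO u).inter W.2.2.1) ⟨u.1, hm u, u.2⟩ with hg
    obtain ⟨x, hx⟩ := W.2.1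
    have hAne : (Set.range g).Nonempty := ⟨g ⟨x, hx⟩, Set.mem_range_self _⟩
    have hU : (unionOpenInv s (Set.range g) hAne).1 = W.1 := by
      show ⋃ V ∈ Set.range g, V.1 = W.1
      rw [Set.biUnion_range]
      apply Set.Subset.antisymm
      · exact Set.iUnion_subset fun u =>
          sat_subset_of_invariant W.2.2.2 Set.inter_subset_right
      · intro y hy
        exact Set.mem_iUnion.mpr ⟨⟨y, hy⟩, ⟨y, ⟨hm ⟨y, hy⟩, hy⟩, s.refl y⟩⟩
    have h1 := hπ (Set.range g) hAne
    rw [piVal_congr π hU] at h1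
    rw [h1]
    refine (Submodule.mem_iInf _).mpr fun V => (Submodule.mem_iInf _).mpr ?_
    rintro ⟨u, rfl⟩
    exact pi_antitone_s11 hπ (sat_mono Set.inter_subset_left) (hmem u)
  · refine le_iInf₂ fun u hu => ?_
    have h1 : π (satOpenInv s hs W.1 W.2.2.1 ⟨u, hu⟩) = π W :=
      piVal_congr π (sat_of_invariant W.2.2.2)
    rw [← h1]
    exact le_iSup (fun U : {U : Set X // IsOpen U ∧ u ∈ U} =>
      π (satOpenInv s hs U.1 U.2.1 ⟨u, U.2.2⟩)) ⟨W.1, W.2.2.1, hu⟩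

end Main

/-- `ρ ↦ π_ρ`, where `π_ρ(U) = ⋂_{u ∈ U} ρ(u)`, is a bijection from
the set of continuous invariant functions `ρ : X → L(R)` onto the set of
consistent functions `π : O → L(R)`, with inverse `π ↦ ρ_π` where
`ρ_π(u) = ⋃ { π([U]) : U ⊆ X open, u ∈ U }`. -/
theorem piRho_bijective {R : Type*} [CommRing R] (s : Setoid X)
    (hs : OpenSaturations s) :
    (∀ ρ : X → Ideal R, Continuous ρ → (∀ x y : X, s.r x y → ρ x = ρ y) →
      ConsistentOn s (fun U : OpenInv X s => ⨅ u ∈ U.1, ρ u)) ∧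
    (∀ π : OpenInv X s → Ideal R, ConsistentOn s π →
      ∃! ρ : X → Ideal R,
        (Continuous ρ ∧ ∀ x y : X, s.r x y → ρ x = ρ y) ∧
        (fun U : OpenInv X s => ⨅ u ∈ U.1, ρ u) = π) ∧
    (∀ π : OpenInv X s → Ideal R, ConsistentOn s π →
      ∀ ρ : X → Ideal R,
        (Continuous ρ ∧ ∀ x y : X, s.r x y → ρ x = ρ y) →
        (fun U : OpenInv X s => ⨅ u ∈ U.1, ρ u) = π →
        ∀ u : X, ((ρ u : Ideal R) : Set R) = rhoPiSet s hs π u) := by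
  refine ⟨fun ρ _ _ => piOfRho_consistent ρ, fun π hπ => ?_, fun π hπ ρ hρ heq u => ?_⟩
  · refine ⟨rhoPi s hs π, ⟨⟨rhoPi_continuous hs hπ, rhoPi_invariant hs⟩,
      piOfRhoPi_eq hs hπ⟩, ?_⟩
    rintro ρ ⟨⟨hc, hinv⟩, heq⟩
    funext u
    exact rho_eq_rhoPi hs π ρ hc hinv heq u
  · rw [rho_eq_rhoPi hs π ρ hρ.1 hρ.2 heq u, coe_rhoPi hs hπ u]
end

section
/- Let R be a commutative ring with identity and X a topological space. If ρ₁, ρ₂ : X → L(R) are continuous with respect to the topology on L(R) generated by the sets Z(F), then the pointwise sum u ↦ ρ₁(u) + ρ₂(u) is also continuous from X to L(R). -/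
/-- if `ρ₁, ρ₂ : X → L(R)` are continuous, then so is the pointwise
sum `u ↦ ρ₁(u) + ρ₂(u)`. -/
theorem continuous_ideal_pointwise_add (R : Type*) [CommRing R]
    (X : Type*) [TopologicalSpace X] (ρ₁ ρ₂ : X → Ideal R)
    (h₁ : Continuous ρ₁) (h₂ : Continuous ρ₂) :
    Continuous (fun u => ρ₁ u + ρ₂ u) := by
  classical
  rw [continuous_generateFrom_iff]
  rintro s ⟨F, rfl⟩
  rw [isOpen_iff_forall_mem_open]
  intro u hu
  simp only [Set.mem_preimage, zSet, Set.mem_setOf_eq] at hu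
  -- for each f ∈ F, pick a decomposition f = a f + b f
  have hdec : ∀ f : F, ∃ a ∈ ρ₁ u, ∃ b ∈ ρ₂ u, a + b = (f : R) := by
    intro f
    have : (f : R) ∈ ρ₁ u + ρ₂ u := hu f.2
    rwa [Submodule.add_eq_sup, Submodule.mem_sup] at this
  choose a ha b hb hab using hdec
  refine ⟨ρ₁ ⁻¹' zSet R (Finset.image a F.attach) ∩
          ρ₂ ⁻¹' zSet R (Finset.image b F.attach), ?_, ?_, ?_, ?_⟩
  · intro v ⟨hv1, hv2⟩
    simp only [Set.mem_preimage, zSet, Set.mem_setOf_eq] at hv1 hv2 ⊢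
    intro f hf
    have h1 : a ⟨f, hf⟩ ∈ ρ₁ v := hv1 (by simp)
    have h2 : b ⟨f, hf⟩ ∈ ρ₂ v := hv2 (by simp)
    have : a ⟨f, hf⟩ + b ⟨f, hf⟩ ∈ ρ₁ v + ρ₂ v := by
      rw [Submodule.add_eq_sup, Submodule.mem_sup]
      exact ⟨_, h1, _, h2, rfl⟩
    rwa [hab ⟨f, hf⟩] at this
  · exact IsOpen.inter
      (h₁.isOpen_preimage _ (TopologicalSpace.isOpen_generateFrom_of_mem ⟨_, rfl⟩))
      (h₂.isOpen_preimage _ (TopologicalSpace.isOpen_generateFrom_of_mem ⟨_, rfl⟩))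
  · simp only [Set.mem_preimage, zSet, Set.mem_setOf_eq, Finset.coe_image]
    rintro x ⟨f, hf, rfl⟩
    exact ha f
  · simp only [Set.mem_preimage, zSet, Set.mem_setOf_eq, Finset.coe_image]
    rintro x ⟨f, hf, rfl⟩
    exact hb f
end

section
/- Let E be a row-finite directed graph with no sources. Then the map H ↦ U_H := { x ∈ E^∞ : x(n) ∈ H for all sufficiently large n } is a bijection from the set H_E of saturated hereditary subsets of E⁰ onto the set of open invariant subsets of the infinite path space E^∞. Moreover, for every H ∈ H_E one has H = { v ∈ E⁰ : Z(v) ⊆ U_H }, and for every A ⊆ H_E one has U_{⋁_{H∈A} H} = ⋃_{H∈A} U_H. -/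
noncomputable section

/-- A directed graph with vertex set `V`, edge set `E`, range map `r` and source map `s`. -/
structure DGraph (V E : Type) where
  r : E → V
  s : E → V

namespace DGraph

variable {V E : Type} (G : DGraph V E)

/-- `E` is row-finite: `vE¹ = {e : r(e) = v}` is finite for every vertex `v`. -/
def RowFinite : Prop := ∀ v : V, {e : E | G.r e = v}.Finite

/-- `E` has no sources: `vE¹` is nonempty for every vertex `v`. -/
def NoSources : Prop := ∀ v : V, {e : E | G.r e = v}.Nonempty

/-- A finite path in `G`: a list of edges `e₁ ⋯ eₙ` with `s(eᵢ) = r(eᵢ₊₁)`, together with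
a base vertex which equals the source `s(eₙ)` of the last edge (for the empty path, the
path is just the vertex `base`). -/
structure Path (G : DGraph V E) where
  base : V
  edges : List E
  chain : edges.Chain' (fun e f => G.s e = G.r f)
  last_src : ∀ e ∈ edges.getLast?, G.s e = base

/-- The source vertex of a finite path. -/
def Path.src {G : DGraph V E} (p : Path G) : V := p.base

/-- The range vertex of a finite path. -/
def Path.rng {G : DGraph V E} (p : Path G) : V :=
  (p.edges.head?.map G.r).getD p.base

/-- A return path based at `v`: a finite path of positive length with range and source `v`
which visits `v` only as its range and source. -/
def IsReturnPath (v : V) (p : Path G) : Prop :=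
  p.edges ≠ [] ∧ p.rng = v ∧ p.src = v ∧ ∀ e ∈ p.edges.dropLast, G.s e ≠ v

/-- Condition (K): every vertex is the base of no return path or of at least two distinct
return paths. -/
def CondK : Prop :=
  ∀ v : V, (∀ p : Path G, ¬ G.IsReturnPath v p) ∨
    ∃ p q : Path G, p ≠ q ∧ G.IsReturnPath v p ∧ G.IsReturnPath v q

/-- A subset `H ⊆ E⁰` is hereditary and saturated. -/
def SatHereditary (H : Set V) : Prop :=
  (∀ e : E, G.r e ∈ H → G.s e ∈ H) ∧
  (∀ v : V, (∀ e : E, G.r e = v → G.s e ∈ H) → v ∈ H)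

/-- The smallest saturated hereditary subset of `E⁰` containing every member of `A`. -/
def satHerClosure (A : Set (Set V)) : Set V :=
  ⋂₀ {H : Set V | G.SatHereditary H ∧ ∀ K ∈ A, K ⊆ H}

lemma satHerClosure_satHereditary (A : Set (Set V)) :
    G.SatHereditary (G.satHerClosure A) := by
  constructor
  · intro e he
    exact Set.mem_sInter.mpr fun H hH => hH.1.1 e (Set.mem_sInter.mp he H hH)
  · intro v hv
    exact Set.mem_sInter.mpr fun H hH =>
      hH.1.2 v (fun e hre => Set.mem_sInter.mp (hv e hre) H hH)


/-- An infinite path in `G`: a sequence of edges `x₀x₁x₂⋯` with `s(xᵢ) = r(xᵢ₊₁)`. -/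
structure InfPath (G : DGraph V E) where
  seq : ℕ → E
  compat : ∀ i : ℕ, G.s (seq i) = G.r (seq (i + 1))

/-- The vertices along an infinite path: `x(0) = r(x₀)` and `x(n) = s(x_{n-1})`. -/
def InfPath.vert {G : DGraph V E} (x : InfPath G) : ℕ → V
  | 0 => G.r (x.seq 0)
  | n + 1 => G.s (x.seq n)

/-- The shift map `σ` on infinite paths. -/
def shiftPath (G : DGraph V E) (x : InfPath G) : InfPath G :=
  ⟨fun i => x.seq (i + 1), fun i => x.compat (i + 1)⟩

/-- The cylinder set of a finite list of edges. -/
def cylList (G : DGraph V E) (l : List E) : Set (InfPath G) :=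
  {x : InfPath G | ∀ i : Fin l.length, x.seq i = l.get i}

/-- The cylinder set `Z(v)` of a vertex. -/
def cylVert (G : DGraph V E) (v : V) : Set (InfPath G) :=
  {x : InfPath G | G.r (x.seq 0) = v}

/-- The topology on the infinite path space, with basis the cylinder sets. -/
instance pathSpaceTopology (G : DGraph V E) : TopologicalSpace (InfPath G) :=
  TopologicalSpace.generateFrom
    ({S : Set (InfPath G) | ∃ v : V, S = cylVert G v} ∪
      {S : Set (InfPath G) | ∃ l : List E, S = cylList G l})

/-- A subset `U` of the infinite path space is invariant if whenever `x ∈ U` and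
`σᵐ(x) = σⁿ(y)` for some `m, n ∈ ℕ`, then `y ∈ U`. -/
def InvariantPaths (G : DGraph V E) (U : Set (InfPath G)) : Prop :=
  ∀ x y : InfPath G,
    (∃ m n : ℕ, (shiftPath G)^[m] x = (shiftPath G)^[n] y) → x ∈ U → y ∈ U

/-- `U_H = { x ∈ E^∞ : x(n) ∈ H for all sufficiently large n }`. -/
def UH (G : DGraph V E) (H : Set V) : Set (InfPath G) :=
  {x : InfPath G | ∃ N : ℕ, ∀ n ≥ N, x.vert n ∈ H}

/-! ### Auxiliary lemmas -/

lemma infPath_ext {x y : InfPath G} (h : x.seq = y.seq) : x = y := by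
  cases x; cases y; simpa using h

lemma vert_eq_r (x : InfPath G) (n : ℕ) : x.vert n = G.r (x.seq n) := by
  cases n with
  | zero => rfl
  | succ n => exact x.compat n

lemma shift_seq (x : InfPath G) (i : ℕ) : (shiftPath G x).seq i = x.seq (i + 1) := rfl

lemma shift_vert (x : InfPath G) (n : ℕ) : (shiftPath G x).vert n = x.vert (n + 1) := by
  cases n with
  | zero => exact (x.compat 0).symm
  | succ n => rfl

lemma shift_iter_seq (x : InfPath G) (m i : ℕ) :
    ((shiftPath G)^[m] x).seq i = x.seq (i + m) := by
  induction m generalizing x with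
  | zero => rfl
  | succ m ih =>
    rw [Function.iterate_succ_apply, ih, shift_seq]
    exact congrArg x.seq (by omega)

lemma shift_iter_vert (x : InfPath G) (m n : ℕ) :
    ((shiftPath G)^[m] x).vert n = x.vert (n + m) := by
  induction m generalizing x with
  | zero => rfl
  | succ m ih =>
    rw [Function.iterate_succ_apply, ih, shift_vert]
    exact congrArg x.vert (by omega)

lemma vert_tail_mem {H : Set V} (hH : ∀ e : E, G.r e ∈ H → G.s e ∈ H)
    {x : InfPath G} {N : ℕ} (h : x.vert N ∈ H) : ∀ n ≥ N, x.vert n ∈ H := by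
  intro n hn
  induction n with
  | zero =>
    have : N = 0 := Nat.le_zero.mp hn
    subst this; exact h
  | succ n ih =>
    rcases Nat.lt_or_ge N (n + 1) with h' | h'
    · have hn' := ih (by omega)
      show G.s (x.seq n) ∈ H
      exact hH _ (by rw [← G.vert_eq_r]; exact hn')
    · have : N = n + 1 := by omega
      subst this; exact h

/-- Prepend an edge to an infinite path. -/
def consPath (e : E) (x : InfPath G) (h : G.s e = G.r (x.seq 0)) : InfPath G where
  seq := fun i => match i with
    | 0 => e
    | j + 1 => x.seq j
  compat := by
    intro i
    cases i with
    | zero => exact h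
    | succ j => exact x.compat j

lemma shift_consPath (e : E) (x : InfPath G) (h : G.s e = G.r (x.seq 0)) :
    shiftPath G (G.consPath e x h) = x :=
  G.infPath_ext rfl

/-- Splice the first `N` edges of `x` onto a path `z` starting at `x.vert N`. -/
def splice (x : InfPath G) (N : ℕ) (z : InfPath G) (h : G.r (z.seq 0) = x.vert N) :
    InfPath G where
  seq := fun i => if i < N then x.seq i else z.seq (i - N)
  compat := by
    intro i
    show G.s (if i < N then x.seq i else z.seq (i - N)) =
      G.r (if i + 1 < N then x.seq (i + 1) else z.seq (i + 1 - N))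
    rcases Nat.lt_or_ge (i + 1) N with h1 | h1
    · rw [if_pos (by omega : i < N), if_pos h1]
      exact x.compat i
    · rcases Nat.lt_or_ge i N with h2 | h2
      · have hiN : i + 1 = N := by omega
        rw [if_pos h2, if_neg (by omega : ¬ i + 1 < N)]
        have h0 : i + 1 - N = 0 := by omega
        rw [h0, h, ← hiN]
        rfl
      · rw [if_neg (by omega : ¬ i < N), if_neg (by omega : ¬ i + 1 < N)]
        have h0 : i + 1 - N = (i - N) + 1 := by omega
        rw [h0]
        exact z.compat (i - N)

lemma splice_seq_lt (x z : InfPath G) (N : ℕ) (h : G.r (z.seq 0) = x.vert N)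
    {i : ℕ} (hi : i < N) : (G.splice x N z h).seq i = x.seq i := if_pos hi

lemma shift_iter_splice (x z : InfPath G) (N : ℕ) (h : G.r (z.seq 0) = x.vert N) :
    (shiftPath G)^[N] (G.splice x N z h) = z := by
  apply G.infPath_ext
  funext i
  rw [G.shift_iter_seq]
  show (if i + N < N then x.seq (i + N) else z.seq (i + N - N)) = z.seq i
  rw [if_neg (by omega)]
  congr 1; omega

lemma UH_mono {H K : Set V} (h : H ⊆ K) : UH G H ⊆ UH G K := by
  rintro x ⟨N, hN⟩
  exact ⟨N, fun n hn => h (hN n hn)⟩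

lemma invariant_UH (H : Set V) : InvariantPaths G (UH G H) := by
  rintro x y ⟨m, n, hmn⟩ ⟨N, hN⟩
  refine ⟨N + n, fun k hk => ?_⟩
  have h1 : ((shiftPath G)^[n] y).vert (k - n) = y.vert k := by
    rw [G.shift_iter_vert]; congr 1; omega
  have h2 : ((shiftPath G)^[m] x).vert (k - n) = x.vert (k - n + m) :=
    G.shift_iter_vert x m (k - n)
  rw [← h1, ← hmn, h2]
  exact hN _ (by omega)

lemma isOpen_UH {H : Set V} (hH : ∀ e : E, G.r e ∈ H → G.s e ∈ H) :
    IsOpen (UH G H) := by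
  rw [isOpen_iff_forall_mem_open]
  rintro x ⟨N, hN⟩
  refine ⟨cylList G (List.ofFn fun i : Fin (N + 1) => x.seq i), ?_, ?_, ?_⟩
  · intro y hy
    refine ⟨N + 1, G.vert_tail_mem hH ?_⟩
    have hyN : y.seq N = x.seq N := by
      have h := hy ⟨N, by simp⟩
      rw [List.get_ofFn] at h
      exact h
    show G.s (y.seq N) ∈ H
    rw [hyN]
    exact G.vert_tail_mem hH (hN N le_rfl) (N + 1) (by omega)
  · exact TopologicalSpace.GenerateOpen.basic _ (Or.inr ⟨_, rfl⟩)
  · intro i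
    rw [List.get_ofFn]
    rfl

lemma mem_UH_self {H : Set V} (hH : ∀ e : E, G.r e ∈ H → G.s e ∈ H)
    {v : V} (hv : v ∈ H) : cylVert G v ⊆ UH G H := by
  intro x hx
  refine ⟨0, G.vert_tail_mem hH ?_⟩
  show G.r (x.seq 0) ∈ H
  rw [hx]; exact hv

lemma exists_prefix {U : Set (InfPath G)} (hU : IsOpen U) {x : InfPath G} (hx : x ∈ U) :
    ∃ N, ∀ y : InfPath G, (∀ i < N, y.seq i = x.seq i) → y ∈ U := by
  have hU' : TopologicalSpace.GenerateOpen
      ({S : Set (InfPath G) | ∃ v : V, S = cylVert G v} ∪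
        {S : Set (InfPath G) | ∃ l : List E, S = cylList G l}) U := hU
  clear hU
  revert hx
  induction hU' with
  | basic S hS =>
    intro hx
    rcases hS with ⟨v, rfl⟩ | ⟨l, rfl⟩
    · refine ⟨1, fun y hy => ?_⟩
      show G.r (y.seq 0) = v
      rw [hy 0 one_pos]; exact hx
    · refine ⟨l.length, fun y hy => ?_⟩
      intro i
      rw [hy i i.isLt]; exact hx i
  | univ => exact fun _ => ⟨0, fun y _ => trivial⟩
  | inter S T _ _ ihS ihT =>
    intro hx
    obtain ⟨NS, hNS⟩ := ihS hx.1
    obtain ⟨NT, hNT⟩ := ihT hx.2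
    refine ⟨max NS NT, fun y hy => ?_⟩
    exact ⟨hNS y fun i hi => hy i (by omega), hNT y fun i hi => hy i (by omega)⟩
  | sUnion 𝒮 _ ih =>
    rintro ⟨t, ht, hxt⟩
    obtain ⟨N, hN⟩ := ih t ht hxt
    exact ⟨N, fun y hy => ⟨t, ht, hN y hy⟩⟩

lemma UH_model {U : Set (InfPath G)} (hU : IsOpen U) (hInv : InvariantPaths G U) :
    UH G {v : V | cylVert G v ⊆ U} = U := by
  ext x
  constructor
  · rintro ⟨N, hN⟩
    have h1 : (shiftPath G)^[N] x ∈ cylVert G (x.vert N) := by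
      show G.r (((shiftPath G)^[N] x).seq 0) = x.vert N
      rw [G.shift_iter_seq, G.vert_eq_r]
      norm_num
    exact hInv _ x ⟨0, N, rfl⟩ (hN N le_rfl h1)
  · intro hx
    obtain ⟨N, hN⟩ := G.exists_prefix hU hx
    refine ⟨N, fun n hn => ?_⟩
    intro z hz
    have hy : G.splice x n z hz ∈ U :=
      hN _ fun i hi => G.splice_seq_lt x z n hz (lt_of_lt_of_le hi hn)
    exact hInv _ z ⟨n, 0, G.shift_iter_splice x z n hz⟩ hy

lemma satHer_model {U : Set (InfPath G)} (hInv : InvariantPaths G U) :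
    G.SatHereditary {v : V | cylVert G v ⊆ U} := by
  constructor
  · intro e he x hx
    have hmem : G.consPath e x hx.symm ∈ cylVert G (G.r e) := rfl
    have hy : G.consPath e x hx.symm ∈ U := he hmem
    refine hInv _ x ⟨1, 0, ?_⟩ hy
    simpa using G.shift_consPath e x hx.symm
  · intro v hv x hx
    have h0 : G.s (x.seq 0) ∈ {v : V | cylVert G v ⊆ U} := hv (x.seq 0) hx
    have hsx : shiftPath G x ∈ U :=
      h0 (show G.r ((shiftPath G x).seq 0) = G.s (x.seq 0) from (x.compat 0).symm)
    refine hInv _ x ⟨0, 1, ?_⟩ hsx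
    simp

/-- Vertex sequence avoiding `H`. -/
def avoidVerts (f : V → E) (v : V) : ℕ → V :=
  fun n => Nat.rec v (fun _ u => G.s (f u)) n

/-- Path whose `n`-th edge is `f` of the `n`-th avoiding vertex. -/
def avoidPath (f : V → E) (hf : ∀ w, G.r (f w) = w) (v : V) : InfPath G where
  seq := fun n => f (G.avoidVerts f v n)
  compat := by
    intro i
    show G.s (f (G.avoidVerts f v i)) = G.r (f (G.avoidVerts f v (i + 1)))
    rw [hf]
    rfl

lemma avoidPath_vert (f : V → E) (hf : ∀ w, G.r (f w) = w) (v : V) (n : ℕ) :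
    (G.avoidPath f hf v).vert n = G.avoidVerts f v n := by
  cases n with
  | zero => exact hf v
  | succ n => rfl

lemma satHer_fixpoint {H : Set V} (hns : G.NoSources) (hH : G.SatHereditary H) :
    H = {v : V | cylVert G v ⊆ UH G H} := by
  apply Set.eq_of_subset_of_subset
  · intro v hv
    exact G.mem_UH_self hH.1 hv
  · intro v hv
    by_contra hvH
    have hch : ∀ w : V, ∃ e : E, G.r e = w ∧ (w ∉ H → G.s e ∉ H) := by
      intro w
      by_cases hw : w ∈ H
      · obtain ⟨e, he⟩ := hns w
        exact ⟨e, he, fun h => absurd hw h⟩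
      · by_contra hc
        push_neg at hc
        exact hw (hH.2 w fun e hre => (hc e hre).2)
    choose f hf1 hf2 using hch
    have hw : ∀ n, G.avoidVerts f v n ∉ H := by
      intro n
      induction n with
      | zero => exact hvH
      | succ n ih => exact hf2 _ ih
    have hx0 : G.avoidPath f hf1 v ∈ cylVert G v := by
      show G.r ((G.avoidPath f hf1 v).seq 0) = v
      exact hf1 v
    obtain ⟨N, hNmem⟩ := hv hx0
    have := hNmem N le_rfl
    rw [G.avoidPath_vert] at this
    exact hw N this

/-- for a row-finite graph `E` with no sources, `H ↦ U_H` is a bijection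
from the set of saturated hereditary subsets of `E⁰` onto the set of open invariant
subsets of `E^∞`; moreover `H = { v : Z(v) ⊆ U_H }` and `U_{⋁_{H∈A} H} = ⋃_{H∈A} U_H`. -/
theorem UH_bijection (G : DGraph V E) (hfin : G.RowFinite) (hns : G.NoSources) :
    Set.BijOn (fun H : Set V => UH G H) {H : Set V | G.SatHereditary H}
      {U : Set (InfPath G) | IsOpen U ∧ InvariantPaths G U} ∧
    (∀ H : Set V, G.SatHereditary H → H = {v : V | cylVert G v ⊆ UH G H}) ∧
    (∀ A : Set (Set V), (∀ H ∈ A, G.SatHereditary H) →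
      UH G (G.satHerClosure A) = ⋃ H ∈ A, UH G H) := by
  have key2 : ∀ H : Set V, G.SatHereditary H → H = {v : V | cylVert G v ⊆ UH G H} :=
    fun H hH => G.satHer_fixpoint hns hH
  refine ⟨⟨?_, ?_, ?_⟩, key2, ?_⟩
  · intro H hH
    exact ⟨G.isOpen_UH hH.1, G.invariant_UH H⟩
  · intro H hH K hK hUK
    have hUK' : UH G H = UH G K := hUK
    rw [key2 H hH, key2 K hK, hUK']
  · intro U hU
    exact ⟨{v | cylVert G v ⊆ U}, G.satHer_model hU.2, G.UH_model hU.1 hU.2⟩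
  · intro A hA
    have hWopen : IsOpen (⋃ H ∈ A, UH G H) :=
      isOpen_biUnion fun H hH => G.isOpen_UH (hA H hH).1
    have hWinv : InvariantPaths G (⋃ H ∈ A, UH G H) := by
      rintro x y hrel hx
      simp only [Set.mem_iUnion] at hx ⊢
      obtain ⟨H, hH, hxH⟩ := hx
      exact ⟨H, hH, G.invariant_UH H x y hrel hxH⟩
    apply Set.eq_of_subset_of_subset
    · have h1 : G.satHerClosure A ⊆ {v | cylVert G v ⊆ ⋃ H ∈ A, UH G H} := by
        refine Set.sInter_subset_of_mem ⟨G.satHer_model hWinv, ?_⟩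
        intro K hK v hv
        have hsub : cylVert G v ⊆ UH G K := G.mem_UH_self (hA K hK).1 hv
        exact fun x hx => Set.mem_biUnion hK (hsub hx)
      calc UH G (G.satHerClosure A)
          ⊆ UH G {v | cylVert G v ⊆ ⋃ H ∈ A, UH G H} := G.UH_mono h1
        _ = ⋃ H ∈ A, UH G H := G.UH_model hWopen hWinv
    · intro x hx
      simp only [Set.mem_iUnion] at hx
      obtain ⟨K, hK, hxK⟩ := hx
      have hKsub : K ⊆ G.satHerClosure A :=
        fun v hv => Set.mem_sInter.mpr fun H hH => hH.2 K hK hv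
      exact G.UH_mono hKsub hxK
end DGraph
end
end

section
/- Let E be a row-finite directed graph with no sources and let A be a collection of saturated hereditary subsets of E⁰. Then ⋁_{H∈A} H = { v ∈ E⁰ : there exists n ∈ ℕ such that s(vEⁿ) ⊆ ⋃_{H∈A} H }, where vEⁿ denotes the set of finite paths of length n with range v and s(vEⁿ) the set of their sources. -/
noncomputable section

namespace DGraph

variable {V E : Type} (G : DGraph V E)

/-!
The right-hand side is the union over `n` of the sets `{v | s(vEⁿ) ⊆ ⋃ A}`, which increase
with `n` because `⋃ A` is hereditary. Each of them lies in every saturated hereditary set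
containing `⋃ A`, by induction on `n` using saturation. Conversely their union contains `⋃ A`,
is hereditary, and is saturated because each `vE¹` is finite, so a single `n` works for the
sources of all edges in `vE¹`.
-/

namespace Path

variable {G : DGraph V E}

lemma rng_eq_src_of_edges_eq_nil {p : Path G} (h : p.edges = []) : p.rng = p.src := by
  simp [rng, src, h]

lemma rng_eq_of_edges_eq_cons {p : Path G} {e : E} {l : List E} (h : p.edges = e :: l) :
    p.rng = G.r e := by
  simp [rng, h]

def nil (G : DGraph V E) (v : V) : Path G :=
  ⟨v, [], List.isChain_nil, by simp⟩

def cons (e : E) (p : Path G) (h : G.s e = p.rng) : Path G where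
  base := p.base
  edges := e :: p.edges
  chain := List.isChain_cons.mpr ⟨fun f hf => by
    obtain ⟨l, hl⟩ := List.head?_eq_some_iff.mp hf
    rw [h, rng_eq_of_edges_eq_cons hl], p.chain⟩
  last_src := by
    intro f hf
    cases hl : p.edges with
    | nil =>
      simp only [hl, List.getLast?_singleton, Option.mem_def, Option.some.injEq] at hf
      rw [← hf, h, rng_eq_src_of_edges_eq_nil hl, src]
    | cons a t => exact p.last_src f (by rwa [hl, ← List.getLast?_cons_cons (a := e), ← hl])

def tail (p : Path G) : Path G where
  base := p.base
  edges := p.edges.tail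
  chain := p.chain.tail
  last_src f hf := by
    refine p.last_src f ?_
    match hl : p.edges with
    | [] => simp [hl] at hf
    | [_] => simp [hl] at hf
    | a :: b :: l => simpa [hl] using hf

@[simp] lemma edges_cons (e : E) (p : Path G) (h : G.s e = p.rng) :
    (cons e p h).edges = e :: p.edges := rfl

@[simp] lemma rng_cons (e : E) (p : Path G) (h : G.s e = p.rng) : (cons e p h).rng = G.r e := rfl

@[simp] lemma src_cons (e : E) (p : Path G) (h : G.s e = p.rng) : (cons e p h).src = p.src := rfl

@[simp] lemma src_tail (p : Path G) : p.tail.src = p.src := rfl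

lemma rng_tail_of_edges_eq_cons {p : Path G} {e : E} {l : List E} (h : p.edges = e :: l) :
    p.tail.rng = G.s e := by
  cases l with
  | nil =>
    exact (rng_eq_src_of_edges_eq_nil (by simp [tail, h])).trans (p.last_src e (by simp [h])).symm
  | cons f l =>
    rw [rng_eq_of_edges_eq_cons (e := f) (l := l) (by simp [tail, h])]
    exact (List.isChain_cons_cons.mp (h ▸ p.chain)).1.symm

end Path

/-- `G.SourcesIn S n v` says `s(vEⁿ) ⊆ S`. -/
def SourcesIn (S : Set V) (n : ℕ) (v : V) : Prop :=
  ∀ p : Path G, p.edges.length = n → p.rng = v → p.src ∈ S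

def IsHereditary (S : Set V) : Prop := ∀ e : E, G.r e ∈ S → G.s e ∈ S

def pathSaturation (S : Set V) : Set V := {v | ∃ n, G.SourcesIn S n v}

variable {G} {S : Set V}

lemma sourcesIn_zero {v : V} : G.SourcesIn S 0 v ↔ v ∈ S := by
  refine ⟨fun h => h (Path.nil G v) rfl rfl, fun hv p hp hpv => ?_⟩
  rwa [← Path.rng_eq_src_of_edges_eq_nil (List.length_eq_zero_iff.mp hp), hpv]

lemma sourcesIn_succ {n : ℕ} {v : V} :
    G.SourcesIn S (n + 1) v ↔ ∀ e : E, G.r e = v → G.SourcesIn S n (G.s e) := by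
  refine ⟨fun h e he p hp hpe => ?_, fun h p hp hpv => ?_⟩
  · simpa using h (p.cons e hpe.symm) (by simp [hp]) (by simp [he])
  · obtain ⟨e, l, hl⟩ := List.exists_cons_of_length_eq_add_one hp
    simpa using h e (Path.rng_eq_of_edges_eq_cons hl ▸ hpv) p.tail
      (by simpa [Path.tail, hl] using hp) (Path.rng_tail_of_edges_eq_cons hl)

lemma IsHereditary.sourcesIn_succ (hS : G.IsHereditary S) {n : ℕ} {v : V}
    (h : G.SourcesIn S n v) : G.SourcesIn S (n + 1) v := by
  induction n generalizing v with
  | zero =>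
    exact DGraph.sourcesIn_succ.mpr fun e he =>
      sourcesIn_zero.mpr (hS e (he ▸ sourcesIn_zero.mp h))
  | succ n ih => exact DGraph.sourcesIn_succ.mpr fun e he => ih (DGraph.sourcesIn_succ.mp h e he)

lemma IsHereditary.sourcesIn_mono (hS : G.IsHereditary S) {m n : ℕ} (hmn : m ≤ n) {v : V}
    (h : G.SourcesIn S m v) : G.SourcesIn S n v := by
  induction n, hmn using Nat.le_induction with
  | base => exact h
  | succ n _ ih => exact hS.sourcesIn_succ ih

lemma isHereditary_sUnion {A : Set (Set V)} (hA : ∀ H ∈ A, G.IsHereditary H) :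
    G.IsHereditary (⋃₀ A) := by
  rintro e ⟨H, hH, he⟩
  exact ⟨H, hH, hA H hH e he⟩

lemma subset_pathSaturation : S ⊆ G.pathSaturation S :=
  fun _ hv => ⟨0, sourcesIn_zero.mpr hv⟩

lemma pathSaturation_subset {H : Set V} (hH : G.SatHereditary H) (hSH : S ⊆ H) :
    G.pathSaturation S ⊆ H := by
  rintro v ⟨n, hn⟩
  induction n generalizing v with
  | zero => exact hSH (sourcesIn_zero.mp hn)
  | succ n ih => exact hH.2 v fun e he => ih (sourcesIn_succ.mp hn e he)

lemma satHereditary_pathSaturation (hfin : G.RowFinite) (hS : G.IsHereditary S) :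
    G.SatHereditary (G.pathSaturation S) := by
  refine ⟨fun e ⟨n, hn⟩ => ⟨n, sourcesIn_succ.mp (hS.sourcesIn_succ hn) e rfl⟩,
    fun v hv => ?_⟩
  choose! depth hdepth using hv
  refine ⟨(hfin v).toFinset.sup depth + 1, sourcesIn_succ.mpr fun e he => ?_⟩
  exact hS.sourcesIn_mono (Finset.le_sup (by simpa using he)) (hdepth e he)

theorem satHerClosure_eq_general (G : DGraph V E) (hfin : G.RowFinite)
    (A : Set (Set V)) (hA : ∀ H ∈ A, G.SatHereditary H) :
    G.satHerClosure A =
      {v : V | ∃ n : ℕ, ∀ p : Path G,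
        p.edges.length = n → p.rng = v → p.src ∈ ⋃₀ A} := by
  change G.satHerClosure A = G.pathSaturation (⋃₀ A)
  have hUnion : G.IsHereditary (⋃₀ A) := isHereditary_sUnion fun H hH => (hA H hH).1
  apply subset_antisymm
  · exact Set.sInter_subset_of_mem ⟨satHereditary_pathSaturation hfin hUnion,
      fun K hK => (Set.subset_sUnion_of_mem hK).trans subset_pathSaturation⟩
  · exact pathSaturation_subset (G.satHerClosure_satHereditary A)
      (Set.sUnion_subset fun K hK => Set.subset_sInter fun H hH => hH.2 K hK)

/-- for a row-finite graph `E` with no sources and a collection `A` of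
saturated hereditary subsets of `E⁰`, the smallest saturated hereditary set containing
every member of `A` is `{ v ∈ E⁰ : ∃ n, s(vEⁿ) ⊆ ⋃ A }`, where `vEⁿ` is the set of finite
paths of length `n` with range `v`. -/
theorem satHerClosure_eq (G : DGraph V E) (hfin : G.RowFinite) (hns : G.NoSources)
    (A : Set (Set V)) (hA : ∀ H ∈ A, G.SatHereditary H) :
    G.satHerClosure A =
      {v : V | ∃ n : ℕ, ∀ p : Path G,
        p.edges.length = n → p.rng = v → p.src ∈ ⋃₀ A} :=
  satHerClosure_eq_general G hfin A hA

end DGraph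
end
end
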